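/- arXiv:1412.0631 — 2 statements merged into one kernel-verified Lean document; each statement's English description precedes it below -/
import Mathlib

section
/- Let (M, τ) be a II₁ factor (or tracial von Neumann algebra) and let x be the self-adjoint unitary built from a conference matrix C of size r as x = (r−1)^{-1/2} ∑_{i,j} C_{ij} v_i* v_j with e_i, v_i as above. Let p_1,...,p_n be projections in an abelian subalgebra A containing all e_i, with ∑_k p_k = 1. Set p_{ik} = e_i p_k and T_k = ∑_{i=1}^r v_i p_{ik} v_i*. Then ∑_{k=1}^n ‖p_k x p_k‖₂² = (r−1)^{-1} ( τ(∑_{k=1}^n T_k²) − 1 ), where ‖y‖₂² = τ(y* y). -/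
/-- With `x` the self-adjoint unitary built from a conference matrix `C` of size
`r` via `x = (r−1)^{-1/2} ∑_{i,j} C_{ij} vᵢ* vⱼ`, projections `p₁,...,pₙ` in an abelian
subalgebra `A` containing all `eᵢ`, `p_{ik} = eᵢ pₖ` and `Tₖ = ∑ᵢ vᵢ p_{ik} vᵢ*`, one has
`∑ₖ ‖pₖ x pₖ‖₂² = (r−1)⁻¹ (τ(∑ₖ Tₖ²) − 1)`, where `‖y‖₂² = τ(y* y)`. -/
theorem stmt8 {M : Type*} [CStarAlgebra M]
    (τ : M →ₗ[ℂ] ℂ) (htrace : ∀ a b : M, τ (a * b) = τ (b * a)) (hτ1 : τ 1 = 1)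
    (A : StarSubalgebra ℂ M) (hAcomm : ∀ x ∈ A, ∀ y ∈ A, x * y = y * x)
    {r : ℕ} (hr : 0 < r)
    (C : Matrix (Fin r) (Fin r) ℝ)
    (hCdiag : ∀ i, C i i = 0)
    (hCoff : ∀ i j, i ≠ j → C i j = 1 ∨ C i j = -1)
    (hCsymm : ∀ i j, C i j = C j i)
    (hCunit : ∀ i k, ∑ j, C i j * C j k = if i = k then ((r : ℝ) - 1) else 0)
    (e : Fin r → M) (heA : ∀ i, e i ∈ A)
    (he : ∀ i, IsIdempotentElem (e i) ∧ IsSelfAdjoint (e i))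
    (horth : ∀ i j, i ≠ j → e i * e j = 0) (hsum : ∑ i, e i = 1)
    (hτe : ∀ i, τ (e i) = ((r : ℂ))⁻¹)
    (v : Fin r → M)
    (hv1 : ∀ i, v i * star (v i) = e ⟨0, hr⟩)
    (hv2 : ∀ i, star (v i) * v i = e i)
    {n : ℕ} (p : Fin n → M) (hpA : ∀ k, p k ∈ A)
    (hp : ∀ k, IsIdempotentElem (p k) ∧ IsSelfAdjoint (p k))
    (hpsum : ∑ k, p k = 1)
    (x : M)
    (hx : x = (((Real.sqrt ((r : ℝ) - 1))⁻¹ : ℝ) : ℂ) •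
        ∑ i, ∑ j, ((C i j : ℝ) : ℂ) • (star (v i) * v j))
    (T : Fin n → M)
    (hT : ∀ k, T k = ∑ i, v i * (e i * p k) * star (v i)) :
    ∑ k, τ (star (p k * x * p k) * (p k * x * p k)) =
      ((r : ℂ) - 1)⁻¹ * (τ (∑ k, T k * T k) - 1) := by
  classical
  set α : ℂ := (((Real.sqrt ((r : ℝ) - 1))⁻¹ : ℝ) : ℂ) with hαdef
  -- commutation of p's and e's
  have hpe : ∀ k i, p k * e i = e i * p k := fun k i => hAcomm _ (hpA k) _ (heA i)
  -- partial isometry identities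
  have hvsv : ∀ i, v i * star (v i) * v i = v i := by
    intro i
    have hW : v i * star (v i) * v i - v i = (e ⟨0, hr⟩ - 1) * v i := by
      rw [sub_mul, one_mul, ← hv1 i]
    have h1 : (v i * star (v i) * v i - v i) * star (v i * star (v i) * v i - v i) = 0 := by
      rw [hW, star_mul]
      have hs : star (e ⟨0, hr⟩ - 1) = e ⟨0, hr⟩ - 1 := by
        rw [star_sub, star_one, (he ⟨0, hr⟩).2.star_eq]
      rw [hs, ← mul_assoc, mul_assoc (e ⟨0, hr⟩ - 1), hv1 i, sub_mul, one_mul,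
        (he ⟨0, hr⟩).1, sub_self, zero_mul]
    exact sub_eq_zero.mp ((CStarRing.mul_star_self_eq_zero_iff _).mp h1)
  have hve : ∀ i, v i * e i = v i := by
    intro i; rw [← hv2 i, ← mul_assoc, hvsv i]
  have hes : ∀ i, e i * star (v i) = star (v i) := by
    intro i
    have h := congrArg star (hve i)
    rwa [star_mul, (he i).2.star_eq] at h
  have hsvm : ∀ i (m : M), star (v i) * (v i * m) = e i * m := by
    intro i m; rw [← mul_assoc, hv2]
  have hem : ∀ i (m : M), e i * (e i * m) = e i * m := by
    intro i m; rw [← mul_assoc, (he i).1]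
  have hpem : ∀ k i (m : M), p k * (e i * m) = e i * (p k * m) := by
    intro k i m; rw [← mul_assoc, hpe, mul_assoc]
  have hpm : ∀ k (m : M), p k * (p k * m) = p k * m := by
    intro k m; rw [← mul_assoc, (hp k).1]
  have hvp : ∀ (i : Fin r) (k : Fin n), v i * p k = v i * (e i * p k) := by
    intro i k; rw [← mul_assoc, hve]
  -- x is self-adjoint
  have hconj : (starRingEnd ℂ) α = α := by rw [hαdef]; exact Complex.conj_ofReal _
  have hsa : star x = x := by
    rw [hx]
    simp only [star_smul, star_sum, star_mul, star_star, Complex.star_def,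
      Complex.conj_ofReal, hconj]
    congr 1
    rw [Finset.sum_comm]
    exact Finset.sum_congr rfl fun b _ => Finset.sum_congr rfl fun b' _ => by rw [hCsymm]
  -- the zero lemma
  have hz : ∀ (k : Fin n) (j i' : Fin r), j ≠ i' → v j * (p k * star (v i')) = 0 := by
    intro k j i' hji
    conv_lhs => rw [← hve j, ← hes i']
    rw [mul_assoc (v j), ← mul_assoc (p k) (e i'), hpe k i', ← mul_assoc (e j),
      ← mul_assoc (e j), horth j i' hji, zero_mul, zero_mul, mul_zero]
  -- the key term computation
  have hterm : ∀ (k : Fin n) (i j i' j' : Fin r),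
      τ ((star (v i) * (v j * p k)) * (star (v i') * (v j' * p k))) =
      if j' = i ∧ i' = j
        then τ ((v i * (e i * p k) * star (v i)) * (v j * (e j * p k) * star (v j)))
        else 0 := by
    intro k i j i' j'
    by_cases h1 : i' = j
    · by_cases h2 : j' = i
      · rw [if_pos ⟨h2, h1⟩, h1, h2]
        rw [mul_assoc (star (v i)), htrace (star (v i))]
        have hre : (v j * p k) * (star (v j) * (v i * p k)) * star (v i) =
            (v j * (e j * p k) * star (v j)) * (v i * (e i * p k) * star (v i)) := by
          rw [hvp j k, hvp i k]; simp only [mul_assoc]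
        rw [hre, htrace]
      · rw [if_neg (fun h => h2 h.1)]
        rw [mul_assoc (star (v i)), htrace (star (v i))]
        have hre : (v j * p k) * (star (v i') * (v j' * p k)) * star (v i) =
            v j * p k * (star (v i') * (v j' * (p k * star (v i)))) := by
          simp only [mul_assoc]
        rw [hre, hz k j' i (fun h => h2 h), mul_zero, mul_zero, map_zero]
    · rw [if_neg (fun h => h1 h.2)]
      have hre : (star (v i) * (v j * p k)) * (star (v i') * (v j' * p k)) =
          star (v i) * (v j * (p k * star (v i')) * (v j' * p k)) := by
        simp only [mul_assoc]
      rw [hre, hz k j i' (fun h => h1 h.symm), zero_mul, mul_zero, map_zero]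
  -- scalar coefficient
  have hcc : ∀ (i j : Fin r) (t : ℂ),
      ((C i j : ℝ) : ℂ) * (((C j i : ℝ) : ℂ) * t) = if i = j then 0 else t := by
    intro i j t
    by_cases h : i = j
    · subst h; simp [hCdiag]
    · rw [if_neg h, hCsymm i j]
      have h2 : C j i = 1 ∨ C j i = -1 := by rw [← hCsymm i j]; exact hCoff i j h
      rcases h2 with h1 | h1 <;> rw [h1] <;> norm_num
  -- diagonal terms
  have hAA : ∀ (i : Fin r) (k : Fin n),
      (v i * (e i * p k) * star (v i)) * (v i * (e i * p k) * star (v i)) =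
      v i * (e i * p k) * star (v i) := by
    intro i k
    simp only [mul_assoc]
    rw [hsvm, hem, hpem, hem, hpm]
  have hτa : ∀ (i : Fin r) (k : Fin n),
      τ (v i * (e i * p k) * star (v i)) = τ (e i * p k) := by
    intro i k
    rw [htrace, hsvm, hem]
  -- sum splitting lemma
  have hsplit : ∀ (f : Fin r → Fin r → ℂ),
      ∑ i, ∑ j, (if i = j then 0 else f i j) = (∑ i, ∑ j, f i j) - ∑ i, f i i := by
    intro f
    have h1 : ∀ i : Fin r, ∑ j, (if i = j then 0 else f i j) = (∑ j, f i j) - f i i := by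
      intro i
      have h2 : ∀ j : Fin r, (if i = j then 0 else f i j) =
          f i j - (if i = j then f i j else 0) := by
        intro j; by_cases h : i = j <;> simp [h]
      rw [Finset.sum_congr rfl fun j _ => h2 j, Finset.sum_sub_distrib,
        Fintype.sum_ite_eq]
    rw [Finset.sum_congr rfl fun i _ => h1 i, Finset.sum_sub_distrib]
  -- per-k computation
  have hxk : ∀ k, τ (star (p k * x * p k) * (p k * x * p k)) =
      α * α * ((∑ i, ∑ j, τ ((v i * (e i * p k) * star (v i)) *
          (v j * (e j * p k) * star (v j)))) -
        ∑ i, τ (e i * p k)) := by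
    intro k
    have hps : star (p k) = p k := (hp k).2.star_eq
    -- step 1: reduce to τ ((x * p k) * (x * p k))
    have h1 : star (p k * x * p k) = p k * (x * p k) := by
      rw [star_mul, star_mul, hps, hsa]
    have h2 : p k * (x * p k) * (p k * x * p k) = p k * ((x * p k) * (x * p k)) := by
      simp only [mul_assoc]
      rw [← mul_assoc (p k) (p k), (hp k).1]
    have h3 : (x * p k) * (x * p k) * p k = (x * p k) * (x * p k) := by
      simp only [mul_assoc]
      rw [(hp k).1]
    rw [h1, h2, htrace, h3]
    -- step 2: expand x
    have hxp : x * p k = α • ∑ i, ∑ j, ((C i j : ℝ) : ℂ) • (star (v i) * (v j * p k)) := by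
      rw [hx]
      simp only [smul_mul_assoc, Finset.sum_mul, mul_assoc]
    rw [hxp, smul_mul_assoc, mul_smul_comm, map_smul, map_smul, smul_eq_mul, smul_eq_mul,
      ← mul_assoc]
    congr 1
    -- step 3: expand the quadruple sum
    have hexp : τ ((∑ i, ∑ j, ((C i j : ℝ) : ℂ) • (star (v i) * (v j * p k))) *
        ∑ i', ∑ j', ((C i' j' : ℝ) : ℂ) • (star (v i') * (v j' * p k))) =
        ∑ i, ∑ j, ∑ i', ∑ j', ((C i j : ℝ) : ℂ) * (((C i' j' : ℝ) : ℂ) *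
          τ ((star (v i) * (v j * p k)) * (star (v i') * (v j' * p k)))) := by
      rw [Finset.sum_mul, map_sum]
      refine Finset.sum_congr rfl fun i _ => ?_
      rw [Finset.sum_mul, map_sum]
      refine Finset.sum_congr rfl fun j _ => ?_
      rw [smul_mul_assoc, map_smul, smul_eq_mul]
      congr 1
      simp only [Finset.mul_sum, mul_smul_comm, map_sum, map_smul, smul_eq_mul]
    rw [hexp]
    -- step 4: collapse using hterm
    have h5 : ∀ i j : Fin r, ∑ i', ∑ j', ((C i j : ℝ) : ℂ) * (((C i' j' : ℝ) : ℂ) *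
        τ ((star (v i) * (v j * p k)) * (star (v i') * (v j' * p k)))) =
        ((C i j : ℝ) : ℂ) * (((C j i : ℝ) : ℂ) *
          τ ((v i * (e i * p k) * star (v i)) * (v j * (e j * p k) * star (v j)))) := by
      intro i j
      simp only [hterm k i j, mul_ite, mul_zero, ite_and]
      rw [Finset.sum_comm]
      simp [Fintype.sum_ite_eq']
    rw [Finset.sum_congr rfl fun i _ => Finset.sum_congr rfl fun j _ => h5 i j]
    have h6 : ∀ i j : Fin r, ((C i j : ℝ) : ℂ) * (((C j i : ℝ) : ℂ) *
        τ ((v i * (e i * p k) * star (v i)) * (v j * (e j * p k) * star (v j)))) =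
        if i = j then 0 else
          τ ((v i * (e i * p k) * star (v i)) * (v j * (e j * p k) * star (v j))) :=
      fun i j => hcc i j _
    rw [Finset.sum_congr rfl fun i _ => Finset.sum_congr rfl fun j _ => h6 i j, hsplit]
    congr 1
    refine Finset.sum_congr rfl fun i _ => ?_
    rw [hAA, hτa]
  -- expand T k * T k
  have hTk : ∀ k, τ (T k * T k) = ∑ i, ∑ j, τ ((v i * (e i * p k) * star (v i)) *
      (v j * (e j * p k) * star (v j))) := by
    intro k
    rw [hT k, Finset.sum_mul_sum, map_sum]
    exact Finset.sum_congr rfl fun i _ => map_sum τ _ _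
  -- the diagonal sums to 1
  have hdiag : ∑ k, ∑ i, τ (e i * p k) = 1 := by
    rw [Finset.sum_comm]
    have h : τ ((∑ i, e i) * ∑ k, p k) = ∑ i, ∑ k, τ (e i * p k) := by
      rw [Finset.sum_mul_sum, map_sum]
      exact Finset.sum_congr rfl fun i _ => map_sum τ _ _
    rw [← h, hsum, hpsum, one_mul, hτ1]
  -- α * α = (r - 1)⁻¹
  have hα : α * α = ((r : ℂ) - 1)⁻¹ := by
    have h1 : (1 : ℝ) ≤ (r : ℝ) := by exact_mod_cast hr
    have h0 : (0 : ℝ) ≤ (r : ℝ) - 1 := by linarith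
    have h2 : ((Real.sqrt ((r : ℝ) - 1))⁻¹) * ((Real.sqrt ((r : ℝ) - 1))⁻¹)
        = (((r : ℝ) - 1))⁻¹ := by
      rw [← mul_inv, Real.mul_self_sqrt h0]
    calc α * α = (((Real.sqrt ((r : ℝ) - 1))⁻¹ * (Real.sqrt ((r : ℝ) - 1))⁻¹ : ℝ) : ℂ) := by
          rw [hαdef]; push_cast; ring
      _ = (((((r : ℝ) - 1))⁻¹ : ℝ) : ℂ) := by rw [h2]
      _ = ((r : ℂ) - 1)⁻¹ := by push_cast; ring
  -- assemble
  calc ∑ k, τ (star (p k * x * p k) * (p k * x * p k))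
      = ∑ k, (α * α * (τ (T k * T k) - ∑ i, τ (e i * p k))) := by
        refine Finset.sum_congr rfl fun k _ => ?_
        rw [hxk k, hTk k]
    _ = α * α * ((∑ k, τ (T k * T k)) - 1) := by
        rw [← Finset.mul_sum, Finset.sum_sub_distrib, hdiag]
    _ = ((r : ℂ) - 1)⁻¹ * (τ (∑ k, T k * T k) - 1) := by
        rw [hα, map_sum]
end

section
/- Let A ⊆ M be a MASA in a finite von Neumann algebra with trace τ, and suppose u ∈ M is a unitary normalizing A (u A u* = A) with u^m = 1 and E_A(u^k) = 0 for 1 ≤ k ≤ m−1. If p_1,...,p_n is a partition of unity by projections in A such that ‖p_i u^k p_i‖ ≤ c for some c < 1, all i = 1,...,n and all k = 1,...,m−1, then n ≥ m. -/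
/-!
Conjugation by `u` restricts to a trace-preserving automorphism `σ` of the abelian algebra `A`.
For a projection `p ∈ A` and `1 ≤ k < m`, `p σᵏ(p) = p uᵏ p u⁻ᵏ` is a projection of norm
`‖p uᵏ p‖ ≤ c < 1`, hence zero. So `p, σ(p), …, σᵐ⁻¹(p)` are pairwise orthogonal projections of
trace `τ(p)` each, whose sum is a projection; therefore `m τ(p) ≤ 1`. Summing over the partition
`p₁, …, pₙ` of the unit gives `m ≤ n`.
-/

open Finset Unitary

theorem IsStarProjection.eq_zero_of_norm_lt_one {E : Type*} [NonUnitalNormedRing E] [StarRing E]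
    [CStarRing E] {e : E} (he : IsStarProjection e) (hlt : ‖e‖ < 1) : e = 0 := by
  have hsq : ‖e‖ * ‖e‖ = ‖e‖ := by
    rw [← CStarRing.norm_star_mul_self, he.isSelfAdjoint.star_eq, he.isIdempotentElem.eq]
  have : ‖e‖ = 0 := by nlinarith [norm_nonneg e]
  exact norm_eq_zero.mp this

theorem norm_mul_conj_unitary {E : Type*} [NormedRing E] [StarRing E] [CStarRing E]
    (a b : E) {v : E} (hv : v ∈ unitary E) : ‖a * (v * b * star v)‖ = ‖a * v * b‖ := by
  rw [← mul_assoc, ← mul_assoc, CStarRing.norm_mul_mem_unitary _ (star_mem hv)]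

theorem IsStarProjection.mul_conj_unitary_eq_zero {E : Type*} [NormedRing E] [StarRing E]
    [CStarRing E] {p v : E} (hp : IsStarProjection p) (hv : v ∈ unitary E)
    (hcomm : Commute p (v * p * star v)) (hnorm : ‖p * v * p‖ < 1) :
    p * (v * p * star v) = 0 := by
  have hconj : IsStarProjection (v * p * star v) :=
    hp.map (conjStarAlgAut ℕ E ⟨v, hv⟩)
  refine (hp.mul hconj hcomm).eq_zero_of_norm_lt_one ?_
  rwa [norm_mul_conj_unitary _ _ hv]

theorem IsStarProjection.sum_range {R : Type*} [NonUnitalNonAssocSemiring R] [StarRing R]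
    {f : ℕ → R} {m : ℕ} (hf : ∀ k < m, IsStarProjection (f k))
    (horth : ∀ j k, j < k → k < m → f j * f k = 0) :
    IsStarProjection (∑ k ∈ range m, f k) := by
  induction m with
  | zero => simp
  | succ m ih =>
    rw [sum_range_succ]
    refine (ih (fun k hk ↦ hf k (by omega)) fun j k hjk hk ↦ horth j k hjk (by omega)).add
      (hf m m.lt_succ_self) ?_
    rw [sum_mul]
    exact sum_eq_zero fun j hj ↦ horth j m (mem_range.mp hj) m.lt_succ_self

theorem StarAlgEquiv.pow_apply_mul_pow_apply_eq_zero {S R : Type*}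
    [NonUnitalNonAssocSemiring R] [Star R] [SMul S R] (σ : R ≃⋆ₐ[S] R) {p : R} {j k : ℕ}
    (hjk : j ≤ k) (h : p * (σ ^ (k - j)) p = 0) : (σ ^ j) p * (σ ^ k) p = 0 := by
  rw [← Nat.add_sub_cancel' hjk, pow_add, StarAlgEquiv.mul_apply, ← map_mul, h, map_zero]

theorem apply_conj_unitary_eq_of_comm {R β : Type*} [Monoid R] [StarMul R] (τ : R → β)
    (hτ : ∀ a b, τ (a * b) = τ (b * a)) {u : R} (hu : u ∈ unitary R) (x : R) :
    τ (u * x * star u) = τ x := by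
  rw [hτ, ← mul_assoc, star_mul_self_of_mem hu, one_mul]

theorem Unitary.conjStarAlgAut_pow_apply {S R : Type*} [Semiring R] [StarMul R] [SMul S R]
    [IsScalarTower S R R] [SMulCommClass S R R] (u : unitary R) (k : ℕ) (x : R) :
    (conjStarAlgAut S R u ^ k) x = (u : R) ^ k * x * star ((u : R) ^ k) := by
  rw [← map_pow, conjStarAlgAut_apply, SubmonoidClass.coe_pow]

theorem re_apply_le_one_of_isStarProjection {R F : Type*} [Ring R] [StarRing R] [FunLike F R ℂ]
    [AddMonoidHomClass F R ℂ] (τ : F) (hτ1 : τ 1 = 1) (hτpos : ∀ x, 0 ≤ (τ (star x * x)).re)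
    {q : R} (hq : IsStarProjection q) : (τ q).re ≤ 1 := by
  have h := hτpos (1 - q)
  rw [hq.one_sub.isSelfAdjoint.star_eq, hq.one_sub.isIdempotentElem.eq, map_sub, hτ1] at h
  simpa using h

theorem le_card_of_sum_eq_one {ι : Type*} [Fintype ι] {x : ι → ℝ} {m : ℕ}
    (hsum : ∑ i, x i = 1) (hx : ∀ i, m * x i ≤ 1) : m ≤ Fintype.card ι := by
  have : (m : ℝ) ≤ Fintype.card ι := by
    calc (m : ℝ) = ∑ i, m * x i := by rw [← mul_sum, hsum, mul_one]
      _ ≤ ∑ _i : ι, (1 : ℝ) := sum_le_sum fun i _ ↦ hx i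
      _ = Fintype.card ι := by simp
  exact_mod_cast this

theorem stmt10_general {M : Type*} [CStarAlgebra M]
    (τ : M →ₗ[ℂ] ℂ) (htrace : ∀ a b : M, τ (a * b) = τ (b * a)) (hτ1 : τ 1 = 1)
    (hτpos : ∀ x : M, 0 ≤ (τ (star x * x)).re ∧ (τ (star x * x)).im = 0)
    (A : StarSubalgebra ℂ M) (hAcomm : ∀ x ∈ A, ∀ y ∈ A, x * y = y * x)
    (u : M) (hu_unitary : star u * u = 1 ∧ u * star u = 1)
    (hu_norm : ∀ a ∈ A, u * a * star u ∈ A)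
    (m : ℕ)
    {n : ℕ} (p : Fin n → M)
    (hp : ∀ i, p i ∈ A ∧ IsIdempotentElem (p i) ∧ IsSelfAdjoint (p i))
    (hsum : ∑ i, p i = 1)
    (c : ℝ) (hc : c < 1)
    (hpav : ∀ i, ∀ k : ℕ, 1 ≤ k → k ≤ m - 1 → ‖p i * u ^ k * p i‖ ≤ c) :
    m ≤ n := by
  have hu : u ∈ unitary M := mem_iff.mpr hu_unitary
  set σ := conjStarAlgAut ℂ M ⟨u, hu⟩
  have hσ : ∀ k x, (σ ^ k) x = u ^ k * x * star (u ^ k) := fun k ↦ conjStarAlgAut_pow_apply _ k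
  have hσA (k : ℕ) : Set.MapsTo (σ ^ k) A A := by
    rw [StarAlgEquiv.coe_pow]
    exact (Set.MapsTo.iterate hu_norm) k
  have hproj (i : Fin n) : IsStarProjection (p i) := ⟨(hp i).2.1, (hp i).2.2⟩
  have horth (i : Fin n) (d : ℕ) (hd : 1 ≤ d) (hdm : d ≤ m - 1) : p i * (σ ^ d) (p i) = 0 := by
    have hconjA := hσA d (hp i).1
    rw [hσ] at hconjA ⊢
    exact (hproj i).mul_conj_unitary_eq_zero (pow_mem hu d) (hAcomm _ (hp i).1 _ hconjA)
      ((hpav i d hd hdm).trans_lt hc)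
  have hτσ (k : ℕ) (x : M) : τ ((σ ^ k) x) = τ x := by
    rw [hσ]; exact apply_conj_unitary_eq_of_comm τ htrace (pow_mem hu k) x
  have hle (i : Fin n) : m * (τ (p i)).re ≤ 1 := by
    have hQ := IsStarProjection.sum_range (f := fun k ↦ (σ ^ k) (p i)) (m := m)
      (fun k _ ↦ (hproj i).map (σ ^ k))
      fun j k hjk hk ↦ σ.pow_apply_mul_pow_apply_eq_zero hjk.le (horth i _ (by omega) (by omega))
    have := re_apply_le_one_of_isStarProjection τ hτ1 (fun x ↦ (hτpos x).1) hQ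
    rw [map_sum, sum_congr rfl fun k _ ↦ hτσ k (p i), sum_const, card_range, nsmul_eq_mul] at this
    simpa using this
  have hsum_re : ∑ i, (τ (p i)).re = 1 := by
    simpa [← Complex.re_sum, ← map_sum, hsum] using congrArg Complex.re hτ1
  simpa using le_card_of_sum_eq_one hsum_re hle

/-- Let `A ⊆ M` be a MASA in a finite von Neumann algebra with trace `τ`, and let
`u ∈ M` be a unitary normalizing `A` with `uᵐ = 1` and `E_A(uᵏ) = 0` for `1 ≤ k ≤ m−1`.
If `p₁,...,pₙ` is a partition of unity by projections in `A` with `‖pᵢ uᵏ pᵢ‖ ≤ c < 1` for all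
`i` and all `1 ≤ k ≤ m−1`, then `n ≥ m`. -/
theorem stmt10 {M : Type*} [CStarAlgebra M]
    (τ : M →ₗ[ℂ] ℂ) (htrace : ∀ a b : M, τ (a * b) = τ (b * a)) (hτ1 : τ 1 = 1)
    (hτpos : ∀ x : M, 0 ≤ (τ (star x * x)).re ∧ (τ (star x * x)).im = 0)
    (hτfaithful : ∀ x : M, τ (star x * x) = 0 → x = 0)
    (A : StarSubalgebra ℂ M) (hAcomm : ∀ x ∈ A, ∀ y ∈ A, x * y = y * x)
    (hAmasa : ∀ x : M, (∀ a ∈ A, a * x = x * a) → x ∈ A)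
    (u : M) (hu_unitary : star u * u = 1 ∧ u * star u = 1)
    (hu_norm : ∀ a ∈ A, u * a * star u ∈ A)
    (m : ℕ) (hm : 1 ≤ m) (hum : u ^ m = 1)
    (E : M →ₗ[ℂ] M)
    (hErange : ∀ x, E x ∈ A) (hEfix : ∀ a ∈ A, E a = a)
    (hEbimod : ∀ a ∈ A, ∀ b ∈ A, ∀ x : M, E (a * x * b) = a * E x * b)
    (hEτ : ∀ x, τ (E x) = τ x)
    (hEu : ∀ k : ℕ, 1 ≤ k → k ≤ m - 1 → E (u ^ k) = 0)
    {n : ℕ} (p : Fin n → M)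
    (hp : ∀ i, p i ∈ A ∧ IsIdempotentElem (p i) ∧ IsSelfAdjoint (p i))
    (hsum : ∑ i, p i = 1)
    (c : ℝ) (hc : c < 1)
    (hpav : ∀ i, ∀ k : ℕ, 1 ≤ k → k ≤ m - 1 → ‖p i * u ^ k * p i‖ ≤ c) :
    m ≤ n :=
  stmt10_general τ htrace hτ1 hτpos A hAcomm u hu_unitary hu_norm m p hp hsum c hc hpav
end
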